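/- (Appearance of the vacuum state for small perturbation.) Let u_l < u_r and ρ_l, ρ_r > 0. Then there exists ε₀ > 0 such that for all 0 < ε < ε₀, u_l + ∫₀^{ρ_l} √(ε·p′(ξ)/ξ) dξ < u_r − ∫₀^{ρ_r} √(ε·p′(ξ)/ξ) dξ; equivalently u₁(0) < u₂(0), where u₁(ρ) = u_l + ∫_ρ^{ρ_l} √(ε p′(ξ)/ξ) dξ is the 1-rarefaction curve through (u_l, ρ_l) and u₂(ρ) = u_r − ∫_ρ^{ρ_r} √(ε p′(ξ)/ξ) dξ is the 2-rarefaction curve through (u_r, ρ_r). Moreover u₁(ρ) → u_l uniformly for ρ ∈ [0, ρ_l] and u₂(ρ) → u_r uniformly for ρ ∈ [0, ρ_r] as ε → 0⁺. -/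

import Mathlib

/-!
Since `√(ε p′(ξ)/ξ) = √ε e^{ξ/2}` away from `ξ = 0`, both rarefaction curves are explicit:
`∫_ρ^{ρ₀} √(ε p′(ξ)/ξ) dξ = 2√ε (e^{ρ₀/2} - e^{ρ/2})`. They are therefore jointly continuous in
`(ε, ρ)` and constant at `ε = 0`, so on the compact intervals `[0, ρ_l]`, `[0, ρ_r]` they converge
uniformly as `ε → 0`. Evaluating at `ρ = 0`, `u₁(0) → u_l < u_r ← u₂(0)`, which gives `ε₀`.
-/

open Real Filter Topology

/-- The pressure-like function `p(ρ) = ∫₀^ρ ξ·e^ξ dξ`. -/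
noncomputable def p (ρ : ℝ) : ℝ := ∫ ξ in (0:ℝ)..ρ, ξ * Real.exp ξ

open Set MeasureTheory
open scoped Interval

theorem Continuous.tendstoUniformlyOn_of_isCompact {α β γ : Type*} [TopologicalSpace α]
    [TopologicalSpace β] [UniformSpace γ] {f : α → β → γ} (hf : Continuous ↿f) {s : Set β}
    (hs : IsCompact s) (x : α) : TendstoUniformlyOn f (f x) (𝓝 x) s := by
  intro u hu
  obtain ⟨v, hv, hvu⟩ :=
    hs.mem_uniformity_of_prod hf.continuousOn (mem_univ x) (symm_le_uniformity hu)
  rw [nhdsWithin_univ] at hv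
  exact eventually_of_mem hv hvu

lemma sqrt_mul_mul_exp_div_self (ε : ℝ) {ξ : ℝ} (hξ : ξ ≠ 0) :
    √(ε * (ξ * exp ξ) / ξ) = √ε * exp (ξ / 2) := by
  rw [mul_div_assoc, mul_div_cancel_left₀ _ hξ, sqrt_mul' _ (exp_pos ξ).le, exp_half]

lemma integral_sqrt_mul_mul_exp_div_self (ε a b : ℝ) :
    ∫ ξ in a..b, √(ε * (ξ * exp ξ) / ξ) = 2 * √ε * (exp (b / 2) - exp (a / 2)) := by
  have hae : ∀ᵐ ξ, ξ ∈ Ι a b → √(ε * (ξ * exp ξ) / ξ) = √ε * exp (ξ / 2) := by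
    filter_upwards [Measure.ae_ne volume 0] with ξ hξ _
    exact sqrt_mul_mul_exp_div_self ε hξ
  rw [intervalIntegral.integral_congr_ae hae, intervalIntegral.integral_const_mul,
    intervalIntegral.integral_comp_div (fun ξ => exp ξ) two_ne_zero, integral_exp, smul_eq_mul]
  ring

lemma continuous_integral_sqrt_mul_mul_exp_div_self (ρ₀ : ℝ) :
    Continuous fun q : ℝ × ℝ => ∫ ξ in q.2..ρ₀, √(q.1 * (ξ * exp ξ) / ξ) := by
  simp only [integral_sqrt_mul_mul_exp_div_self]
  fun_prop

lemma Continuous.tendstoUniformlyOn_nhdsWithin_const {α β γ : Type*} [TopologicalSpace α]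
    [TopologicalSpace β] [UniformSpace γ] {f : α → β → γ} (hf : Continuous ↿f) {s : Set β}
    (hs : IsCompact s) {x : α} {c : γ} (hc : ∀ y ∈ s, f x y = c) (t : Set α) :
    TendstoUniformlyOn f (fun _ => c) (𝓝[t] x) s :=
  fun u hu => ((hf.tendstoUniformlyOn_of_isCompact hs x).congr_right hc u hu).filter_mono
    nhdsWithin_le_nhds

/-- Appearance of the vacuum state for small perturbation: for `u_l < u_r` there is
`ε₀ > 0` so that for `0 < ε < ε₀` the 1-rarefaction curve at `ρ = 0` lies strictly below
the 2-rarefaction curve at `ρ = 0`; moreover both rarefaction curves converge uniformly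
to the constants `u_l` and `u_r` respectively as `ε → 0⁺`. -/
theorem stmt18 (ul ur ρl ρr : ℝ) (hu : ul < ur) (hρl : 0 < ρl) (hρr : 0 < ρr) :
    (∃ ε₀ > (0:ℝ), ∀ ε : ℝ, 0 < ε → ε < ε₀ →
        ul + (∫ ξ in (0:ℝ)..ρl, Real.sqrt (ε * (ξ * Real.exp ξ) / ξ)) <
        ur - (∫ ξ in (0:ℝ)..ρr, Real.sqrt (ε * (ξ * Real.exp ξ) / ξ))) ∧
    TendstoUniformlyOn
      (fun ε ρ => ul + ∫ ξ in ρ..ρl, Real.sqrt (ε * (ξ * Real.exp ξ) / ξ))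
      (fun _ => ul) (𝓝[>] (0:ℝ)) (Set.Icc 0 ρl) ∧
    TendstoUniformlyOn
      (fun ε ρ => ur - ∫ ξ in ρ..ρr, Real.sqrt (ε * (ξ * Real.exp ξ) / ξ))
      (fun _ => ur) (𝓝[>] (0:ℝ)) (Set.Icc 0 ρr) := by
  have h₁ : TendstoUniformlyOn (fun ε ρ => ul + ∫ ξ in ρ..ρl, √(ε * (ξ * exp ξ) / ξ))
      (fun _ => ul) (𝓝[>] 0) (Icc 0 ρl) :=
    (continuous_const.add (continuous_integral_sqrt_mul_mul_exp_div_self ρl))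
      |>.tendstoUniformlyOn_nhdsWithin_const isCompact_Icc (by simp) _
  have h₂ : TendstoUniformlyOn (fun ε ρ => ur - ∫ ξ in ρ..ρr, √(ε * (ξ * exp ξ) / ξ))
      (fun _ => ur) (𝓝[>] 0) (Icc 0 ρr) :=
    (continuous_const.sub (continuous_integral_sqrt_mul_mul_exp_div_self ρr))
      |>.tendstoUniformlyOn_nhdsWithin_const isCompact_Icc (by simp) _
  refine ⟨?_, h₁, h₂⟩
  have hvacuum := (h₁.tendsto_at (left_mem_Icc.mpr hρl.le)).eventually_lt
    (h₂.tendsto_at (left_mem_Icc.mpr hρr.le)) hu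
  obtain ⟨ε₀, hε₀, hlt⟩ := (nhdsGT_basis (0 : ℝ)).eventually_iff.mp hvacuum
  exact ⟨ε₀, hε₀, fun ε hε hεε₀ => hlt ⟨hε, hεε₀⟩⟩
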